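/- Let A be symmetric positive definite and M invertible with M + Mᵀ − A symmetric positive definite. Then the symmetrized smoother M̃ = M(M + Mᵀ − A)⁻¹Mᵀ is symmetric positive definite, and M̃ − A is symmetric positive semidefinite (equivalently, xᵀAx ≤ xᵀM̃x for all x). -/

import Mathlib

/-!
With `N = M + Mᴴ - A`, the symmetrized smoother `M N⁻¹ Mᴴ` is a congruence of the positive
definite matrix `N⁻¹` by the invertible `M`, hence positive definite. Expanding
`(M - N) N⁻¹ (Mᴴ - N)` gives `M N⁻¹ Mᴴ - (M + Mᴴ - N) = M N⁻¹ Mᴴ - A`, and since `A` is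
Hermitian, `Mᴴ - N = A - M = (M - N)ᴴ`, so `M N⁻¹ Mᴴ - A` is a congruence of `N⁻¹` as well,
hence positive semidefinite.
-/

open Matrix
open scoped ComplexOrder

namespace Matrix

variable {ι : Type*} [Fintype ι]

theorem posDef_iff_transpose_eq_and_dotProduct_mulVec_pos {S : Matrix ι ι ℝ} :
    S.PosDef ↔ Sᵀ = S ∧ ∀ x : ι → ℝ, x ≠ 0 → 0 < x ⬝ᵥ S *ᵥ x := by
  simp [posDef_iff_dotProduct_mulVec, IsHermitian, conjTranspose_eq_transpose_of_trivial]

theorem posSemidef_iff_transpose_eq_and_dotProduct_mulVec_nonneg {S : Matrix ι ι ℝ} :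
    S.PosSemidef ↔ Sᵀ = S ∧ ∀ x : ι → ℝ, 0 ≤ x ⬝ᵥ S *ᵥ x := by
  simp [posSemidef_iff_dotProduct_mulVec, IsHermitian, conjTranspose_eq_transpose_of_trivial]

variable [DecidableEq ι]

theorem sub_mul_nonsing_inv_mul_sub {R : Type*} [CommRing R] {N : Matrix ι ι R}
    (hN : IsUnit N.det) (B C : Matrix ι ι R) :
    (B - N) * N⁻¹ * (C - N) = B * N⁻¹ * C - (B + C - N) := by
  have hNN : N * N⁻¹ = 1 := mul_nonsing_inv N hN
  have hBN : B * N⁻¹ * N = B := by rw [mul_assoc, nonsing_inv_mul N hN, mul_one]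
  rw [sub_mul, sub_mul, hNN, mul_sub, mul_sub, hBN, one_mul, one_mul]
  abel

variable {𝕜 : Type*} [RCLike 𝕜]

noncomputable def symmetrizedSmoother (A M : Matrix ι ι 𝕜) : Matrix ι ι 𝕜 :=
  M * (M + Mᴴ - A)⁻¹ * Mᴴ

variable {A M : Matrix ι ι 𝕜}

theorem PosDef.symmetrizedSmoother (hN : (M + Mᴴ - A).PosDef) (hM : IsUnit M.det) :
    (symmetrizedSmoother A M).PosDef :=
  hN.inv.mul_mul_conjTranspose_same (vecMul_injective_of_isUnit ((isUnit_iff_isUnit_det M).2 hM))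

theorem symmetrizedSmoother_sub_eq (hA : A.IsHermitian) (hN : IsUnit (M + Mᴴ - A).det) :
    symmetrizedSmoother A M - A = (A - Mᴴ) * (M + Mᴴ - A)⁻¹ * (A - Mᴴ)ᴴ := by
  have hAM : (A - Mᴴ)ᴴ = A - M := by rw [conjTranspose_sub, hA.eq, conjTranspose_conjTranspose]
  have hexpand := sub_mul_nonsing_inv_mul_sub hN M Mᴴ
  rw [sub_sub_cancel, show M - (M + Mᴴ - A) = A - Mᴴ by abel,
    show Mᴴ - (M + Mᴴ - A) = A - M by abel] at hexpand
  rw [hAM, hexpand, symmetrizedSmoother]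

theorem PosSemidef.symmetrizedSmoother_sub (hA : A.IsHermitian) (hN : (M + Mᴴ - A).PosDef) :
    (symmetrizedSmoother A M - A).PosSemidef := by
  rw [symmetrizedSmoother_sub_eq hA (isUnit_iff_isUnit_det _ |>.1 hN.isUnit)]
  exact hN.inv.posSemidef.mul_mul_conjTranspose_same _

end Matrix

theorem stmt_16_general (n : ℕ) (A M : Matrix (Fin n) (Fin n) ℝ)
    (hAsym : Aᵀ = A)
    (hM : IsUnit M.det)
    (hsym : (M + Mᵀ - A)ᵀ = M + Mᵀ - A)
    (hpd : ∀ x : Fin n → ℝ, x ≠ 0 → 0 < x ⬝ᵥ (M + Mᵀ - A) *ᵥ x)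
    (Mt : Matrix (Fin n) (Fin n) ℝ)
    (hMt : Mt = M * (M + Mᵀ - A)⁻¹ * Mᵀ) :
    Mtᵀ = Mt ∧
    (∀ x : Fin n → ℝ, x ≠ 0 → 0 < x ⬝ᵥ Mt *ᵥ x) ∧
    (Mt - A)ᵀ = Mt - A ∧
    (∀ x : Fin n → ℝ, x ⬝ᵥ A *ᵥ x ≤ x ⬝ᵥ Mt *ᵥ x) := by
  simp only [← conjTranspose_eq_transpose_of_trivial] at hAsym hMt
  have hN : (M + Mᴴ - A).PosDef := by
    rw [conjTranspose_eq_transpose_of_trivial]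
    exact posDef_iff_transpose_eq_and_dotProduct_mulVec_pos.2 ⟨hsym, hpd⟩
  change Mt = symmetrizedSmoother A M at hMt
  subst hMt
  obtain ⟨hMtsym, hMtpos⟩ := posDef_iff_transpose_eq_and_dotProduct_mulVec_pos.1
    (PosDef.symmetrizedSmoother hN hM)
  obtain ⟨hsubsym, hsubnonneg⟩ := posSemidef_iff_transpose_eq_and_dotProduct_mulVec_nonneg.1
    (PosSemidef.symmetrizedSmoother_sub hAsym hN)
  refine ⟨hMtsym, hMtpos, hsubsym, fun x => ?_⟩
  have := hsubnonneg x
  rw [sub_mulVec, dotProduct_sub] at this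
  linarith

theorem stmt_16 (n : ℕ) (A M : Matrix (Fin n) (Fin n) ℝ)
    (hAsym : Aᵀ = A)
    (hApd : ∀ x : Fin n → ℝ, x ≠ 0 → 0 < x ⬝ᵥ A *ᵥ x)
    (hM : IsUnit M.det)
    (hsym : (M + Mᵀ - A)ᵀ = M + Mᵀ - A)
    (hpd : ∀ x : Fin n → ℝ, x ≠ 0 → 0 < x ⬝ᵥ (M + Mᵀ - A) *ᵥ x)
    (Mt : Matrix (Fin n) (Fin n) ℝ)
    (hMt : Mt = M * (M + Mᵀ - A)⁻¹ * Mᵀ) :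
    Mtᵀ = Mt ∧
    (∀ x : Fin n → ℝ, x ≠ 0 → 0 < x ⬝ᵥ Mt *ᵥ x) ∧
    (Mt - A)ᵀ = Mt - A ∧
    (∀ x : Fin n → ℝ, x ⬝ᵥ A *ᵥ x ≤ x ⬝ᵥ Mt *ᵥ x) :=
  stmt_16_general n A M hAsym hM hsym hpd Mt hMt
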